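/- arXiv:0804.0844 — 6 statements merged into one kernel-verified Lean document; each statement's English description precedes it below -/
import Mathlib

section
/- Let K be a field, t, L nonzero elements of K, and k a positive integer. For a divisor a of k with a < k set S_{a,k} := Σ_{1 ≤ m < k, gcd(m,k) = a} t^((k-1)*(m-1) - (a-1)^2) * L^(2a - k - m). Assume 1 - t^((k-1)*b) * L^(-b) ≠ 0 for all divisors b of k with b < k. Then S_{a,k} = t^(-(a-1)^2) * L^(2a) * Σ_{b : a ∣ b, b ∣ k, b < k} μ(b/a) * (t^((k-1)*(b-1)) * L^(-k-b) - t^((k-1)^2) * L^(-2k)) / (1 - t^((k-1)*b) * L^(-b)). -/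
open ArithmeticFunction Finset
open scoped ArithmeticFunction.Moebius ArithmeticFunction.zeta

private lemma sum_moebius_divisors' (n : ℕ) :
    (∑ d ∈ n.divisors, μ d) = if n = 1 then 1 else 0 := by
  have h : (μ * ζ : ArithmeticFunction ℤ) n = ∑ d ∈ n.divisors, μ d :=
    ArithmeticFunction.coe_mul_zeta_apply
  rw [ArithmeticFunction.moebius_mul_coe_zeta] at h
  rw [← h, ArithmeticFunction.one_apply]

private lemma sum_moebius_div' (a g : ℕ) (ha0 : 0 < a) (hg : g ≠ 0) (hag : a ∣ g) :
    (∑ b ∈ g.divisors.filter (a ∣ ·), (μ (b / a) : ℤ)) = if g = a then 1 else 0 := by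
  obtain ⟨c, rfl⟩ := hag
  have hc : c ≠ 0 := by rintro rfl; simp at hg
  have key : (a * c).divisors.filter (a ∣ ·) = c.divisors.image (a * ·) := by
    ext b
    simp only [mem_filter, Nat.mem_divisors, mem_image]
    constructor
    · rintro ⟨⟨hbg, -⟩, d, rfl⟩
      exact ⟨d, ⟨(mul_dvd_mul_iff_left ha0.ne').mp hbg, hc⟩, rfl⟩
    · rintro ⟨d, ⟨hd, -⟩, rfl⟩
      exact ⟨⟨mul_dvd_mul_left a hd, hg⟩, ⟨d, rfl⟩⟩
  rw [key, Finset.sum_image (fun x _ y _ h => by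
    exact Nat.eq_of_mul_eq_mul_left ha0 h)]
  have : ∀ d ∈ c.divisors, (μ (a * d / a) : ℤ) = μ d := by
    intro d _
    rw [Nat.mul_div_cancel_left d ha0]
  rw [Finset.sum_congr rfl this, sum_moebius_divisors']
  congr 1
  simp only [eq_iff_iff]
  constructor
  · rintro rfl; rw [mul_one]
  · intro h
    exact Nat.eq_of_mul_eq_mul_left ha0 (by rw [h, mul_one])

private lemma moebius_indicator' (k a m : ℕ) (hk : 0 < k) (hak : a ∣ k) (ha0 : 0 < a)
    (hm1 : 1 ≤ m) (hmk : m < k) :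
    (∑ b ∈ k.divisors.filter (fun b => a ∣ b ∧ b < k),
        if b ∣ m then (μ (b / a) : ℤ) else 0)
      = if Nat.gcd m k = a then 1 else 0 := by
  rw [← Finset.sum_filter, Finset.filter_filter]
  have hg0 : Nat.gcd m k ≠ 0 := fun h => hk.ne' (Nat.eq_zero_of_gcd_eq_zero_right h)
  have hset : k.divisors.filter (fun b => (a ∣ b ∧ b < k) ∧ b ∣ m)
      = (Nat.gcd m k).divisors.filter (a ∣ ·) := by
    ext b
    simp only [mem_filter, Nat.mem_divisors]
    constructor
    · rintro ⟨⟨hbk, -⟩, ⟨hab, -⟩, hbm⟩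
      exact ⟨⟨Nat.dvd_gcd hbm hbk, hg0⟩, hab⟩
    · rintro ⟨⟨hbg, -⟩, hab⟩
      have hbm : b ∣ m := hbg.trans (Nat.gcd_dvd_left m k)
      have hbk : b ∣ k := hbg.trans (Nat.gcd_dvd_right m k)
      exact ⟨⟨hbk, hk.ne'⟩, ⟨hab, lt_of_le_of_lt (Nat.le_of_dvd hm1 hbm) hmk⟩, hbm⟩
  rw [hset]
  by_cases hag : a ∣ Nat.gcd m k
  · exact sum_moebius_div' a _ ha0 hg0 hag
  · rw [Finset.filter_false_of_mem (fun b hb hab =>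
      hag (hab.trans (Nat.mem_divisors.mp hb).1)), Finset.sum_empty, if_neg]
    intro h; exact hag (h ▸ dvd_refl a)

private lemma lemA' {K : Type*} [Field K] (k a : ℕ) (hk : 0 < k) (hak : a ∣ k) (ha0 : 0 < a)
    (g : ℕ → K) :
    ∑ m ∈ (Finset.Ico 1 k).filter (fun m => Nat.gcd m k = a), g m
    = ∑ b ∈ k.divisors.filter (fun b => a ∣ b ∧ b < k),
        ((μ (b / a) : ℤ) : K) * ∑ m ∈ (Finset.Ico 1 k).filter (fun m => b ∣ m), g m := by
  have step : ∀ b, ((μ (b / a) : ℤ) : K) *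
      ∑ m ∈ (Finset.Ico 1 k).filter (fun m => b ∣ m), g m
      = ∑ m ∈ Finset.Ico 1 k, if b ∣ m then ((μ (b / a) : ℤ) : K) * g m else 0 := by
    intro b
    rw [Finset.mul_sum, Finset.sum_filter]
  rw [Finset.sum_congr rfl (fun b _ => step b), Finset.sum_comm, Finset.sum_filter]
  refine Finset.sum_congr rfl fun m hm => ?_
  rw [Finset.mem_Ico] at hm
  have hind := moebius_indicator' k a m hk hak ha0 hm.1 hm.2
  calc (if Nat.gcd m k = a then g m else 0)
      = (((if Nat.gcd m k = a then 1 else 0 : ℤ)) : K) * g m := by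
        split <;> simp
    _ = (((∑ b ∈ k.divisors.filter (fun b => a ∣ b ∧ b < k),
          if b ∣ m then (μ (b / a) : ℤ) else 0) : ℤ) : K) * g m := by rw [hind]
    _ = ∑ b ∈ k.divisors.filter (fun b => a ∣ b ∧ b < k),
          if b ∣ m then ((μ (b / a) : ℤ) : K) * g m else 0 := by
        push_cast
        rw [Finset.sum_mul]
        refine Finset.sum_congr rfl fun b _ => ?_
        split <;> simp

private lemma lemB' {K : Type*} [Field K] (t L : K) (ht : t ≠ 0) (hL : L ≠ 0)
    (k b : ℕ) (hbk : b ∣ k) (hb0 : 0 < b) (hblt : b < k)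
    (hr : 1 - t ^ (((k : ℤ) - 1) * b) * L ^ (-(b : ℤ)) ≠ 0) :
    ∑ m ∈ (Finset.Ico 1 k).filter (fun m => b ∣ m),
        t ^ (((k : ℤ) - 1) * ((m : ℤ) - 1)) * L ^ (-(m : ℤ))
    = (t ^ (((k : ℤ) - 1) * ((b : ℤ) - 1)) * L ^ (-(b : ℤ))
        - t ^ (((k : ℤ) - 1) ^ 2) * L ^ (-(k : ℤ)))
      / (1 - t ^ (((k : ℤ) - 1) * b) * L ^ (-(b : ℤ))) := by
  have hk : 0 < k := hb0.trans hblt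
  set e : ℤ := (k : ℤ) - 1 with he
  set r : K := t ^ (e * b) * L ^ (-(b : ℤ)) with hrdef
  set n : ℕ := k / b with hn
  have hbn : b * n = k := Nat.mul_div_cancel' hbk
  have hn1 : 1 ≤ n := (Nat.one_le_div_iff hb0).mpr hblt.le
  have himg : (Finset.Ico 1 k).filter (fun m => b ∣ m)
      = (Finset.Ico 1 n).image (fun j => b * j) := by
    ext m
    simp only [mem_filter, mem_Ico, mem_image]
    constructor
    · rintro ⟨⟨h1, h2⟩, j, rfl⟩
      refine ⟨j, ⟨?_, ?_⟩, rfl⟩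
      · by_contra hj; push_neg at hj; interval_cases j; omega
      · rw [← hbn] at h2; exact Nat.lt_of_mul_lt_mul_left h2
    · rintro ⟨j, ⟨hj1, hj2⟩, rfl⟩
      refine ⟨⟨Nat.one_le_iff_ne_zero.mpr (by positivity), ?_⟩, ⟨j, rfl⟩⟩
      rw [← hbn]; exact (Nat.mul_lt_mul_left hb0).mpr hj2
  rw [himg, Finset.sum_image (fun x _ y _ h => by
    exact Nat.eq_of_mul_eq_mul_left hb0 h)]
  have hterm : ∀ j ∈ Finset.Ico 1 n,
      t ^ (e * (((b * j : ℕ) : ℤ) - 1)) * L ^ (-((b * j : ℕ) : ℤ))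
      = t ^ (-e) * r ^ j := by
    intro j _
    have h1 : e * (((b * j : ℕ) : ℤ) - 1) = -e + (e * b) * j := by push_cast; ring
    have h2 : (-((b * j : ℕ) : ℤ)) = (-(b : ℤ)) * j := by push_cast; ring
    rw [h1, h2, zpow_add₀ ht, zpow_mul t (e * (b:ℤ)) (j:ℤ), zpow_mul L (-(b:ℤ)) (j:ℤ),
      zpow_natCast, zpow_natCast, hrdef,
      mul_pow, mul_assoc]
  rw [Finset.sum_congr rfl hterm, ← Finset.mul_sum]
  have hr1 : r ≠ 1 := fun h => hr (by rw [h, sub_self])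
  rw [geom_sum_Ico hr1 hn1, pow_one]
  have hflip : (r ^ n - r) / (r - 1) = (r - r ^ n) / (1 - r) := by
    rw [← neg_sub r (r ^ n), ← neg_sub (1 : K) r, neg_div_neg_eq]
  rw [hflip, mul_div_assoc']
  congr 1
  rw [mul_sub]
  have hA : t ^ (-e) * r = t ^ (e * ((b : ℤ) - 1)) * L ^ (-(b : ℤ)) := by
    rw [hrdef, ← mul_assoc, ← zpow_add₀ ht]
    congr 2
    ring
  have hrn : r ^ n = t ^ (e * k) * L ^ (-(k : ℤ)) := by
    rw [hrdef, mul_pow, ← zpow_natCast (t ^ (e * (b : ℤ))) n,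
      ← zpow_natCast (L ^ (-(b : ℤ))) n, ← zpow_mul, ← zpow_mul]
    have hbk' : ((b : ℤ)) * n = (k : ℤ) := by exact_mod_cast congrArg (Nat.cast : ℕ → ℤ) hbn
    congr 1
    · congr 1; rw [mul_assoc, hbk']
    · congr 1; rw [neg_mul, hbk']
  have hB : t ^ (-e) * r ^ n = t ^ (e ^ 2) * L ^ (-(k : ℤ)) := by
    rw [hrn, ← mul_assoc, ← zpow_add₀ ht]
    congr 2
    rw [he]; ring
  rw [hA, hB]

open ArithmeticFunction in
theorem stmt3 {K : Type*} [Field K] (t L : K) (ht : t ≠ 0) (hL : L ≠ 0)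
    (k : ℕ) (hk : 0 < k)
    (hden : ∀ b ∈ k.divisors, b < k →
      1 - t ^ (((k : ℤ) - 1) * b) * L ^ (-(b : ℤ)) ≠ 0)
    (a : ℕ) (ha : a ∈ k.divisors) (halt : a < k) :
    ∑ m ∈ (Finset.Ico 1 k).filter (fun m => Nat.gcd m k = a),
        t ^ (((k : ℤ) - 1) * ((m : ℤ) - 1) - ((a : ℤ) - 1) ^ 2) *
          L ^ (2 * (a : ℤ) - k - m)
      = t ^ (-((a : ℤ) - 1) ^ 2) * L ^ (2 * (a : ℤ)) *
          ∑ b ∈ k.divisors.filter (fun b => a ∣ b ∧ b < k),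
            ((moebius (b / a) : ℤ) : K) *
              (t ^ (((k : ℤ) - 1) * ((b : ℤ) - 1)) * L ^ (-(k : ℤ) - b)
                - t ^ (((k : ℤ) - 1) ^ 2) * L ^ (-2 * (k : ℤ)))
              / (1 - t ^ (((k : ℤ) - 1) * b) * L ^ (-(b : ℤ))) := by
  have hak : a ∣ k := (Nat.mem_divisors.mp ha).1
  have ha0 : 0 < a := Nat.pos_of_mem_divisors ha
  have hterm : ∀ m : ℕ,
      t ^ (((k : ℤ) - 1) * ((m : ℤ) - 1) - ((a : ℤ) - 1) ^ 2) * L ^ (2 * (a : ℤ) - k - m)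
      = (t ^ (-((a : ℤ) - 1) ^ 2) * L ^ (2 * (a : ℤ) - k)) *
          (t ^ (((k : ℤ) - 1) * ((m : ℤ) - 1)) * L ^ (-(m : ℤ))) := by
    intro m
    rw [show ((k : ℤ) - 1) * ((m : ℤ) - 1) - ((a : ℤ) - 1) ^ 2
        = (-((a : ℤ) - 1) ^ 2) + ((k : ℤ) - 1) * ((m : ℤ) - 1) by ring,
      show 2 * (a : ℤ) - k - m = (2 * (a : ℤ) - k) + (-(m : ℤ)) by ring,
      zpow_add₀ ht, zpow_add₀ hL]
    ring
  calc ∑ m ∈ (Finset.Ico 1 k).filter (fun m => Nat.gcd m k = a),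
        t ^ (((k : ℤ) - 1) * ((m : ℤ) - 1) - ((a : ℤ) - 1) ^ 2) * L ^ (2 * (a : ℤ) - k - m)
      = (t ^ (-((a : ℤ) - 1) ^ 2) * L ^ (2 * (a : ℤ) - k)) *
          ∑ m ∈ (Finset.Ico 1 k).filter (fun m => Nat.gcd m k = a),
            t ^ (((k : ℤ) - 1) * ((m : ℤ) - 1)) * L ^ (-(m : ℤ)) := by
        rw [Finset.mul_sum]
        exact Finset.sum_congr rfl fun m _ => hterm m
    _ = (t ^ (-((a : ℤ) - 1) ^ 2) * L ^ (2 * (a : ℤ) - k)) *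
          ∑ b ∈ k.divisors.filter (fun b => a ∣ b ∧ b < k),
            ((μ (b / a) : ℤ) : K) *
              ∑ m ∈ (Finset.Ico 1 k).filter (fun m => b ∣ m),
                t ^ (((k : ℤ) - 1) * ((m : ℤ) - 1)) * L ^ (-(m : ℤ)) := by
        rw [lemA' k a hk hak ha0]
    _ = (t ^ (-((a : ℤ) - 1) ^ 2) * L ^ (2 * (a : ℤ) - k)) *
          ∑ b ∈ k.divisors.filter (fun b => a ∣ b ∧ b < k),
            ((μ (b / a) : ℤ) : K) *
              ((t ^ (((k : ℤ) - 1) * ((b : ℤ) - 1)) * L ^ (-(b : ℤ))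
                - t ^ (((k : ℤ) - 1) ^ 2) * L ^ (-(k : ℤ)))
              / (1 - t ^ (((k : ℤ) - 1) * b) * L ^ (-(b : ℤ)))) := by
        congr 1
        refine Finset.sum_congr rfl fun b hb => ?_
        rw [Finset.mem_filter] at hb
        obtain ⟨hbdiv, hab, hblt⟩ := hb
        have hbk : b ∣ k := (Nat.mem_divisors.mp hbdiv).1
        have hb0 : 0 < b := Nat.pos_of_mem_divisors hbdiv
        rw [lemB' t L ht hL k b hbk hb0 hblt (hden b hbdiv hblt)]
    _ = _ := by
        rw [Finset.mul_sum, Finset.mul_sum]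
        refine Finset.sum_congr rfl fun b hb => ?_
        rw [show (-(k : ℤ) - b) = (-(k : ℤ)) + (-(b : ℤ)) by ring, zpow_add₀ hL,
          show (-2 * (k : ℤ)) = (-(k : ℤ)) + (-(k : ℤ)) by ring, zpow_add₀ hL,
          show (2 * (a : ℤ) - k) = 2 * (a : ℤ) + (-(k : ℤ)) by ring, zpow_add₀ hL]
        ring
end

section
/- Let K be a field and let t, L be nonzero elements of K. Fix integers a, b with 1 ≤ b < a. Define f(t, L) := (L - 1) * t^((a-1)*b) * L^(-b) * (1 - t^((a-1)*(a-b)) * L^(b-a)) / ((1 - t^(a*(a-1)) * L^(1-a)) * (1 - t^((a-1)*b) * L^(-b))), assuming both factors in the denominator are nonzero (also after replacing (t, L) by (t^{-1}, L^{-1})). Then f(t^{-1}, L^{-1}) = f(t, L). -/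
theorem stmt4 {K : Type*} [Field K] (t L : K) (ht : t ≠ 0) (hL : L ≠ 0)
    (a b : ℤ) (hb : 1 ≤ b) (hba : b < a)
    (h1 : 1 - t ^ (a * (a - 1)) * L ^ (1 - a) ≠ 0)
    (h2 : 1 - t ^ ((a - 1) * b) * L ^ (-b) ≠ 0)
    (h1' : 1 - t⁻¹ ^ (a * (a - 1)) * L⁻¹ ^ (1 - a) ≠ 0)
    (h2' : 1 - t⁻¹ ^ ((a - 1) * b) * L⁻¹ ^ (-b) ≠ 0) :
    (L⁻¹ - 1) * t⁻¹ ^ ((a - 1) * b) * L⁻¹ ^ (-b) *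
        (1 - t⁻¹ ^ ((a - 1) * (a - b)) * L⁻¹ ^ (b - a)) /
        ((1 - t⁻¹ ^ (a * (a - 1)) * L⁻¹ ^ (1 - a)) *
          (1 - t⁻¹ ^ ((a - 1) * b) * L⁻¹ ^ (-b)))
      = (L - 1) * t ^ ((a - 1) * b) * L ^ (-b) *
          (1 - t ^ ((a - 1) * (a - b)) * L ^ (b - a)) /
          ((1 - t ^ (a * (a - 1)) * L ^ (1 - a)) *
            (1 - t ^ ((a - 1) * b) * L ^ (-b))) := by
  have hX : t ^ ((a - 1) * b) * L ^ (-b) ≠ 0 :=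
    mul_ne_zero (zpow_ne_zero _ ht) (zpow_ne_zero _ hL)
  have hZ : t ^ ((a - 1) * (a - b)) * L ^ (b - a) ≠ 0 :=
    mul_ne_zero (zpow_ne_zero _ ht) (zpow_ne_zero _ hL)
  have gen : ∀ p q r s : ℤ, L * (t ^ p * L ^ q * (t ^ r * L ^ s)) =
      t ^ (p + r) * L ^ (1 + q + s) := by
    intro p q r s
    rw [zpow_add₀ ht, zpow_add₀ hL, zpow_add₀ hL, zpow_one]
    ring
  have key : t ^ (a * (a - 1)) * L ^ (1 - a) =
      L * (t ^ ((a - 1) * b) * L ^ (-b) * (t ^ ((a - 1) * (a - b)) * L ^ (b - a))) := by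
    rw [gen]
    congr 1 <;> congr 1 <;> ring
  have eX : t⁻¹ ^ ((a - 1) * b) * L⁻¹ ^ (-b) = (t ^ ((a - 1) * b) * L ^ (-b))⁻¹ := by
    rw [inv_zpow, inv_zpow, mul_inv]
  have eY : t⁻¹ ^ (a * (a - 1)) * L⁻¹ ^ (1 - a) = (t ^ (a * (a - 1)) * L ^ (1 - a))⁻¹ := by
    rw [inv_zpow, inv_zpow, mul_inv]
  have eZ : t⁻¹ ^ ((a - 1) * (a - b)) * L⁻¹ ^ (b - a) =
      (t ^ ((a - 1) * (a - b)) * L ^ (b - a))⁻¹ := by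
    rw [inv_zpow, inv_zpow, mul_inv]
  rw [eY] at h1'
  rw [eX] at h2'
  rw [mul_assoc (L⁻¹ - 1), mul_assoc (L - 1), eX, eY, eZ]
  rw [key] at h1 h1' ⊢
  generalize t ^ ((a - 1) * b) * L ^ (-b) = X at *
  generalize t ^ ((a - 1) * (a - b)) * L ^ (b - a) = Z at *
  rw [div_eq_div_iff (mul_ne_zero h1' h2') (mul_ne_zero h1 h2)]
  field_simp
  ring
end

section
/- Let K be a field, t, L nonzero elements of K, and let G : ℕ+ × ℕ+ → K be a function satisfying: (i) G(k, m) = G(m, k) for all k, m; (ii) G(k, m) = t^(k*(k-1)) * L^(-k) * G(k, m-k) whenever m > k. Then for all coprime positive integers k, m one has G(k, m) = t^((k-1)*(m-1)) * L^(2 - k - m) * G(1, 1). -/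
theorem stmt6 {K : Type*} [Field K] (t L : K) (ht : t ≠ 0) (hL : L ≠ 0)
    (G : ℕ → ℕ → K)
    (hsym : ∀ k m, 0 < k → 0 < m → G k m = G m k)
    (hshift : ∀ k m, 0 < k → k < m →
      G k m = t ^ (k * (k - 1)) * L ^ (-(k : ℤ)) * G k (m - k)) :
    ∀ k m, 0 < k → 0 < m → Nat.gcd k m = 1 →
      G k m = t ^ ((k - 1) * (m - 1)) * L ^ ((2 : ℤ) - k - m) * G 1 1 := by
  have key : ∀ n k m, 2 * k + m = n → 0 < k → 0 < m → Nat.gcd k m = 1 →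
      G k m = t ^ ((k - 1) * (m - 1)) * L ^ ((2 : ℤ) - k - m) * G 1 1 := by
    intro n
    induction n using Nat.strong_induction_on with
    | _ n ih =>
      intro k m hn hk hm hg
      rcases lt_trichotomy k m with h | h | h
      · have hmk : 0 < m - k := by omega
        have hg' : Nat.gcd k (m - k) = 1 := by
          rwa [Nat.gcd_sub_self_right h.le]
        rw [hshift k m hk h, ih (2 * k + (m - k)) (by omega) k (m - k) rfl hk hmk hg']
        have ht1 : k * (k - 1) + (k - 1) * (m - k - 1) = (k - 1) * (m - 1) := by
          rw [Nat.mul_comm k, ← Nat.mul_add]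
          congr 1
          omega
        have hL1 : (-(k : ℤ)) + ((2 : ℤ) - k - (m - k : ℕ)) = (2 : ℤ) - k - m := by
          push_cast [Nat.cast_sub h.le]
          ring
        rw [← ht1, pow_add, ← hL1, zpow_add₀ hL]
        ring
      · have : k = 1 := by
          subst h; rwa [Nat.gcd_self] at hg
        subst this; subst h
        simp
      · have hg' : Nat.gcd m k = 1 := by rwa [Nat.gcd_comm]
        rw [hsym k m hk hm, ih (2 * m + k) (by omega) m k rfl hm hk hg']
        rw [Nat.mul_comm (m - 1)]
        ring_nf
  intro k m hk hm hg
  exact key (2 * k + m) k m rfl hk hm hg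
end

section
/- Let K be a field, t, L nonzero elements of K, and let G : ℕ+ × ℕ+ → K satisfy: (i) G(k, m) = G(m, k) for all k, m; (ii) G(k, m) = t^(k*(k-1)) * L^(-k) * G(k, m-k) whenever m > k. Then for all positive integers k, m with gcd(k, m) = a, one has G(k, m) = t^((k-1)*(m-1) - (a-1)^2) * L^(2a - k - m) * G(a, a). -/
theorem stmt7 {K : Type*} [Field K] (t L : K) (ht : t ≠ 0) (hL : L ≠ 0)
    (G : ℕ → ℕ → K)
    (hsym : ∀ k m, 0 < k → 0 < m → G k m = G m k)
    (hshift : ∀ k m, 0 < k → k < m →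
      G k m = t ^ (k * (k - 1)) * L ^ (-(k : ℤ)) * G k (m - k)) :
    ∀ k m a, 0 < k → 0 < m → Nat.gcd k m = a →
      G k m = t ^ (((k : ℤ) - 1) * ((m : ℤ) - 1) - ((a : ℤ) - 1) ^ 2) *
        L ^ (2 * (a : ℤ) - k - m) * G a a := by
  have main : ∀ n k m a, k + m ≤ n → 0 < k → 0 < m → Nat.gcd k m = a →
      G k m = t ^ (((k : ℤ) - 1) * ((m : ℤ) - 1) - ((a : ℤ) - 1) ^ 2) *
        L ^ (2 * (a : ℤ) - k - m) * G a a := by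
    intro n
    induction n with
    | zero => exact fun k m a h hk hm _ => absurd (Nat.le_zero.mp h) (by omega)
    | succ n ih =>
      intro k m a hle hk hm hgcd
      rcases lt_trichotomy k m with hlt | heq | hgt
      · set d := m - k with hd
        have hdpos : 0 < d := by omega
        have hga : Nat.gcd k d = a := by
          rw [hd, ← hgcd, Nat.gcd_sub_self_right (le_of_lt hlt)]
        have h1 := hshift k m hk hlt
        have h2 := ih k d a (by omega) hk hdpos hga
        rw [h1, ← hd, h2]
        have hdz : (d : ℤ) = (m : ℤ) - k := by omega
        have e1 : (((k : ℤ) - 1) * ((m : ℤ) - 1) - ((a : ℤ) - 1) ^ 2)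
            = ((k * (k - 1) : ℕ) : ℤ) +
              (((k : ℤ) - 1) * ((d : ℤ) - 1) - ((a : ℤ) - 1) ^ 2) := by
          have hk1 : ((k - 1 : ℕ) : ℤ) = (k : ℤ) - 1 := by omega
          have : ((k * (k - 1) : ℕ) : ℤ) = (k : ℤ) * ((k : ℤ) - 1) := by
            rw [Nat.cast_mul, hk1]
          rw [this]; rw [hdz]; ring
        have e2 : (2 * (a : ℤ) - k - m) = (-(k : ℤ)) + (2 * (a : ℤ) - k - d) := by
          rw [hdz]; ring
        rw [e1, e2, zpow_add₀ ht, zpow_add₀ hL, zpow_natCast]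
        ring
      · subst heq
        simp only [Nat.gcd_self] at hgcd
        subst hgcd
        simp only [show ∀ x : ℤ, (x - 1) * (x - 1) - (x - 1) ^ 2 = 0 from fun x => by ring,
          show ∀ x : ℤ, 2 * x - x - x = 0 from fun x => by ring, zpow_zero, one_mul]
      · set d := k - m with hd
        have hdpos : 0 < d := by omega
        have hga : Nat.gcd m d = a := by
          rw [hd, ← hgcd, Nat.gcd_sub_self_right (le_of_lt hgt), Nat.gcd_comm]
        have h1 := hshift m k hm hgt
        have h2 := ih m d a (by omega) hm hdpos hga
        rw [hsym k m hk hm, h1, ← hd, h2]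
        have hdz : (d : ℤ) = (k : ℤ) - m := by omega
        have e1 : (((k : ℤ) - 1) * ((m : ℤ) - 1) - ((a : ℤ) - 1) ^ 2)
            = ((m * (m - 1) : ℕ) : ℤ) +
              (((m : ℤ) - 1) * ((d : ℤ) - 1) - ((a : ℤ) - 1) ^ 2) := by
          have hm1 : ((m - 1 : ℕ) : ℤ) = (m : ℤ) - 1 := by omega
          have : ((m * (m - 1) : ℕ) : ℤ) = (m : ℤ) * ((m : ℤ) - 1) := by
            rw [Nat.cast_mul, hm1]
          rw [this]; rw [hdz]; ring
        have e2 : (2 * (a : ℤ) - k - m) = (-(m : ℤ)) + (2 * (a : ℤ) - m - d) := by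
          rw [hdz]; ring
        rw [e1, e2, zpow_add₀ ht, zpow_add₀ hL, zpow_natCast]
        ring
  intro k m a hk hm hgcd
  exact main (k + m) k m a le_rfl hk hm hgcd
end

section
/- Let K be a field, t, L nonzero elements of K, k a positive integer, and assume 1 - t^((k-1)*b) * L^(-b) ≠ 0 for every divisor b of k with b < k. Then Σ_{1 ≤ m < k, gcd(m,k) = 1} t^((k-1)*(m-1)) * L^(-k-m) = Σ_{b ∣ k, b < k} μ(b) * (t^((k-1)*(b-1)) * L^(-k-b) - t^((k-1)^2) * L^(-2k)) / (1 - t^((k-1)*b) * L^(-b)), where μ is the Möbius function. -/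
open ArithmeticFunction in
theorem stmt17 {K : Type*} [Field K] (t L : K) (ht : t ≠ 0) (hL : L ≠ 0)
    (k : ℕ) (hk : 0 < k)
    (hden : ∀ b ∈ k.divisors, b < k →
      1 - t ^ (((k : ℤ) - 1) * b) * L ^ (-(b : ℤ)) ≠ 0) :
    ∑ m ∈ (Finset.Ico 1 k).filter (fun m => Nat.gcd m k = 1),
        t ^ (((k : ℤ) - 1) * ((m : ℤ) - 1)) * L ^ (-(k : ℤ) - m)
      = ∑ b ∈ k.divisors.filter (fun b => b < k),
          ((moebius b : ℤ) : K) *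
            (t ^ (((k : ℤ) - 1) * ((b : ℤ) - 1)) * L ^ (-(k : ℤ) - b)
              - t ^ (((k : ℤ) - 1) ^ 2) * L ^ (-2 * (k : ℤ)))
            / (1 - t ^ (((k : ℤ) - 1) * b) * L ^ (-(b : ℤ))) := by
  classical
  set c : ℤ := (k : ℤ) - 1 with hc
  set f : ℕ → K := fun m => t ^ (c * ((m : ℤ) - 1)) * L ^ (-(k : ℤ) - m) with hf
  -- Möbius identity
  have hmoeb : ∀ n : ℕ, (∑ d ∈ n.divisors, (moebius d : ℤ)) = if n = 1 then 1 else 0 := by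
    intro n
    have := (ArithmeticFunction.coe_mul_zeta_apply (f := (moebius : ArithmeticFunction ℤ))
      (x := n))
    rw [ArithmeticFunction.moebius_mul_coe_zeta] at this
    rw [← this, ArithmeticFunction.one_apply]
  -- Step 1: rewrite LHS as double sum
  have step1 : ∑ m ∈ (Finset.Ico 1 k).filter (fun m => Nat.gcd m k = 1), f m
      = ∑ b ∈ k.divisors, ((moebius b : ℤ) : K) *
          ∑ m ∈ (Finset.Ico 1 k).filter (fun m => b ∣ m), f m := by
    rw [Finset.sum_filter]
    have : ∀ m ∈ Finset.Ico 1 k,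
        (if Nat.gcd m k = 1 then f m else 0)
          = ∑ b ∈ k.divisors, if b ∣ m then ((moebius b : ℤ) : K) * f m else 0 := by
      intro m hm
      simp only [Finset.mem_Ico] at hm
      have hgcd : Nat.gcd m k ≠ 0 := Nat.gcd_ne_zero_right hk.ne'
      have hdiv : (Nat.gcd m k).divisors = k.divisors.filter (fun b => b ∣ m) := by
        ext d
        simp only [Nat.mem_divisors, Finset.mem_filter, Nat.dvd_gcd_iff]
        constructor
        · rintro ⟨⟨h1, h2⟩, -⟩
          exact ⟨⟨h2, hk.ne'⟩, h1⟩
        · rintro ⟨⟨h2, -⟩, h1⟩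
          exact ⟨⟨h1, h2⟩, hgcd⟩
      rw [← Finset.sum_filter, ← hdiv, ← Finset.sum_mul]
      rcases eq_or_ne (Nat.gcd m k) 1 with h | h
      · rw [if_pos h]
        have hs : (∑ i ∈ (Nat.gcd m k).divisors, ((moebius i : ℤ) : K)) = 1 := by
          rw [← Int.cast_sum, hmoeb, if_pos h, Int.cast_one]
        rw [hs, one_mul]
      · rw [if_neg h]
        have hs : (∑ i ∈ (Nat.gcd m k).divisors, ((moebius i : ℤ) : K)) = 0 := by
          rw [← Int.cast_sum, hmoeb, if_neg h, Int.cast_zero]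
        rw [hs, zero_mul]
    rw [Finset.sum_congr rfl this, Finset.sum_comm]
    refine Finset.sum_congr rfl fun b _ => ?_
    rw [← Finset.sum_filter, Finset.mul_sum]
  -- Step 2: drop the b = k term
  have hkmem : k ∈ k.divisors := Nat.mem_divisors_self k hk.ne'
  have hfilter : k.divisors.filter (fun b => b < k) = k.divisors.erase k := by
    ext b
    simp only [Finset.mem_filter, Finset.mem_erase, Nat.mem_divisors]
    constructor
    · rintro ⟨⟨h1, h2⟩, h3⟩
      exact ⟨h3.ne, h1, h2⟩
    · rintro ⟨h3, h1, h2⟩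
      exact ⟨⟨h1, h2⟩, lt_of_le_of_ne (Nat.le_of_dvd hk h1) h3⟩
  have hkempty : (Finset.Ico 1 k).filter (fun m => k ∣ m) = ∅ := by
    ext m
    simp only [Finset.mem_filter, Finset.mem_Ico, Finset.notMem_empty, iff_false]
    rintro ⟨⟨h1, h2⟩, h3⟩
    exact absurd (Nat.le_of_dvd (by omega) h3) (by omega)
  have step2 : ∑ b ∈ k.divisors, ((moebius b : ℤ) : K) *
        ∑ m ∈ (Finset.Ico 1 k).filter (fun m => b ∣ m), f m
      = ∑ b ∈ k.divisors.filter (fun b => b < k), ((moebius b : ℤ) : K) *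
          ∑ m ∈ (Finset.Ico 1 k).filter (fun m => b ∣ m), f m := by
    rw [hfilter]
    rw [← Finset.add_sum_erase _ _ hkmem, hkempty]
    simp
  -- Step 3: inner geometric sum
  have step3 : ∀ b ∈ k.divisors.filter (fun b => b < k),
      ((moebius b : ℤ) : K) * ∑ m ∈ (Finset.Ico 1 k).filter (fun m => b ∣ m), f m
        = ((moebius b : ℤ) : K) *
            (t ^ (c * ((b : ℤ) - 1)) * L ^ (-(k : ℤ) - b)
              - t ^ (c ^ 2) * L ^ (-2 * (k : ℤ)))
            / (1 - t ^ (c * b) * L ^ (-(b : ℤ))) := by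
    intro b hb
    simp only [Finset.mem_filter, Nat.mem_divisors] at hb
    obtain ⟨⟨hbk, -⟩, hblt⟩ := hb
    have hbpos : 0 < b := Nat.pos_of_dvd_of_pos hbk hk
    obtain ⟨n, hnb⟩ := hbk
    have hn0 : n ≠ 0 := by rintro rfl; omega
    have hn1 : n ≠ 1 := by rintro rfl; omega
    set r : K := t ^ (c * b) * L ^ (-(b : ℤ)) with hr
    have hdb : b ∈ k.divisors := Nat.mem_divisors.mpr ⟨⟨n, hnb⟩, hk.ne'⟩
    have hrne : (1 : K) - r ≠ 0 := hden b hdb hblt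
    have hr1 : r ≠ 1 := by
      intro h; apply hrne; rw [h]; ring
    -- reindex
    have hreindex : ∑ m ∈ (Finset.Ico 1 k).filter (fun m => b ∣ m), f m
        = ∑ j ∈ Finset.Ico 1 n, f (b * j) := by
      refine Finset.sum_nbij' (fun m => m / b) (fun j => b * j) ?_ ?_ ?_ ?_ ?_
      · intro m hm
        simp only [Finset.mem_filter, Finset.mem_Ico] at hm ⊢
        obtain ⟨⟨h1, h2⟩, h3⟩ := hm
        obtain ⟨j, rfl⟩ := h3
        rw [Nat.mul_div_cancel_left j hbpos]
        have hj0 : j ≠ 0 := by rintro rfl; simp at h1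
        refine ⟨by omega, ?_⟩
        rw [hnb] at h2
        exact lt_of_mul_lt_mul_left h2 (Nat.zero_le b)
      · intro j hj
        simp only [Finset.mem_Ico] at hj
        simp only [Finset.mem_filter, Finset.mem_Ico]
        refine ⟨⟨?_, ?_⟩, dvd_mul_right b j⟩
        · exact Nat.mul_pos hbpos (by omega)
        · rw [hnb]
          exact (mul_lt_mul_iff_right₀ hbpos).mpr hj.2
      · intro m hm
        simp only [Finset.mem_filter] at hm
        exact Nat.mul_div_cancel' hm.2
      · intro j hj
        exact Nat.mul_div_cancel_left j hbpos
      · intro m hm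
        simp only [Finset.mem_filter] at hm
        rw [Nat.mul_div_cancel' hm.2]
    -- f (b * j) = t^(-c) * L^(-k) * r^j
    have hfval : ∀ j : ℕ, f (b * j) = t ^ (-c) * L ^ (-(k : ℤ)) * r ^ j := by
      intro j
      have h1 : (c * (((b * j : ℕ) : ℤ) - 1)) = -c + c * (b : ℤ) * (j : ℤ) := by
        push_cast; ring
      have h2 : (-(k : ℤ) - ((b * j : ℕ) : ℤ)) = -(k : ℤ) + (-(b : ℤ)) * (j : ℤ) := by
        push_cast; ring
      rw [hf]
      simp only
      rw [h1, h2, zpow_add₀ ht, zpow_add₀ hL, hr, mul_pow,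
        ← zpow_natCast (t ^ (c * b)), ← zpow_natCast (L ^ (-(b : ℤ))), ← zpow_mul, ← zpow_mul]
      ring
    have hgeom : ∑ j ∈ Finset.Ico 1 n, r ^ j = (r - r ^ n) / (1 - r) := by
      have h1 : (∑ j ∈ Finset.range n, r ^ j) = (∑ j ∈ Finset.Ico 0 1, r ^ j)
          + ∑ j ∈ Finset.Ico 1 n, r ^ j := by
        rw [Finset.range_eq_Ico, ← Finset.sum_Ico_consecutive _ (Nat.zero_le 1) (by omega : 1 ≤ n)]
      have h2 : (∑ j ∈ Finset.Ico 0 1, r ^ j) = 1 := by simp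
      have h0 : ∑ j ∈ Finset.range n, r ^ j = (r ^ n - 1) / (r - 1) := geom_sum_eq hr1 n
      have hr1' : r - 1 ≠ 0 := sub_ne_zero.mpr hr1
      have : ∑ j ∈ Finset.Ico 1 n, r ^ j = (r ^ n - 1) / (r - 1) - 1 := by
        rw [← h0, h1, h2]; ring
      rw [this]
      field_simp
      ring
    have hrn : r ^ n = t ^ (c * k) * L ^ (-(k : ℤ)) := by
      rw [hr, mul_pow, ← zpow_natCast (t ^ (c * b)), ← zpow_natCast (L ^ (-(b : ℤ))),
        ← zpow_mul, ← zpow_mul]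
      have e1 : c * (b : ℤ) * (n : ℤ) = c * (k : ℤ) := by push_cast [hnb]; ring
      have e2 : (-(b : ℤ)) * (n : ℤ) = -(k : ℤ) := by push_cast [hnb]; ring
      rw [e1, e2]
    have e1 : t ^ (-c) * L ^ (-(k : ℤ)) * r
        = t ^ (c * ((b : ℤ) - 1)) * L ^ (-(k : ℤ) - b) := by
      rw [hr, show c * ((b : ℤ) - 1) = -c + c * (b : ℤ) by ring,
        show -(k : ℤ) - (b : ℤ) = -(k : ℤ) + -(b : ℤ) by ring,
        zpow_add₀ ht, zpow_add₀ hL]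
      ring
    have e2 : t ^ (-c) * L ^ (-(k : ℤ)) * (t ^ (c * (k : ℤ)) * L ^ (-(k : ℤ)))
        = t ^ (c ^ 2) * L ^ (-2 * (k : ℤ)) := by
      rw [show c ^ 2 = -c + c * (k : ℤ) by rw [hc]; ring,
        show -2 * (k : ℤ) = -(k : ℤ) + -(k : ℤ) by ring,
        zpow_add₀ ht, zpow_add₀ hL]
      ring
    rw [hreindex, Finset.sum_congr rfl fun j _ => hfval j, ← Finset.mul_sum, hgeom, hrn,
      ← mul_div_assoc, mul_sub, e1, e2, ← mul_div_assoc]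
  calc ∑ m ∈ (Finset.Ico 1 k).filter (fun m => Nat.gcd m k = 1), f m
      = ∑ b ∈ k.divisors, ((moebius b : ℤ) : K) *
          ∑ m ∈ (Finset.Ico 1 k).filter (fun m => b ∣ m), f m := step1
    _ = ∑ b ∈ k.divisors.filter (fun b => b < k), ((moebius b : ℤ) : K) *
          ∑ m ∈ (Finset.Ico 1 k).filter (fun m => b ∣ m), f m := step2
    _ = _ := Finset.sum_congr rfl step3
end

section
/- Let K be a field and t, L nonzero elements of K. Suppose F, F' ∈ K are given by the same rational expression R(t, L) in the sense that F = R(t, L) and F' = R(t^{-1}, L^{-1}), where R(t, L) = (L-1)^2 t^{(k-1)(m-1)} L^{-k-m} * Π_{j=1}^{r} f_j(t, L) for fixed positive integers k, m with gcd given data, and each f_j(t, L) = (L-1) t^{(a_j-1) b_j} L^{-b_j} (1 - t^{(a_j-1)(a_j-b_j)} L^{b_j - a_j}) / ((1 - t^{a_j(a_j-1)} L^{1-a_j})(1 - t^{(a_j-1) b_j} L^{-b_j})) for fixed integers 1 ≤ b_j < a_j, with all denominators nonzero for both parameter values and L ≠ 1. Then F' = t^{-2(k-1)(m-1)} L^{2k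 + 2m - 2} F. -/
theorem stmt19 {K : Type*} [Field K] (t L : K) (ht : t ≠ 0) (hL : L ≠ 0)
    (hL1 : L ≠ 1) (k m : ℕ) (hk : 0 < k) (hm : 0 < m)
    (r : ℕ) (a b : Fin r → ℤ)
    (hab : ∀ j, 1 ≤ b j ∧ b j < a j)
    (hden1 : ∀ j, 1 - t ^ (a j * (a j - 1)) * L ^ (1 - a j) ≠ 0)
    (hden2 : ∀ j, 1 - t ^ ((a j - 1) * b j) * L ^ (-(b j)) ≠ 0)
    (hden1' : ∀ j, 1 - t⁻¹ ^ (a j * (a j - 1)) * L⁻¹ ^ (1 - a j) ≠ 0)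
    (hden2' : ∀ j, 1 - t⁻¹ ^ ((a j - 1) * b j) * L⁻¹ ^ (-(b j)) ≠ 0)
    (F F' : K)
    (hF : F = (L - 1) ^ 2 * t ^ (((k : ℤ) - 1) * ((m : ℤ) - 1)) *
      L ^ (-(k : ℤ) - m) *
      ∏ j, (L - 1) * t ^ ((a j - 1) * b j) * L ^ (-(b j)) *
        (1 - t ^ ((a j - 1) * (a j - b j)) * L ^ (b j - a j)) /
        ((1 - t ^ (a j * (a j - 1)) * L ^ (1 - a j)) *
          (1 - t ^ ((a j - 1) * b j) * L ^ (-(b j)))))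
    (hF' : F' = (L⁻¹ - 1) ^ 2 * t⁻¹ ^ (((k : ℤ) - 1) * ((m : ℤ) - 1)) *
      L⁻¹ ^ (-(k : ℤ) - m) *
      ∏ j, (L⁻¹ - 1) * t⁻¹ ^ ((a j - 1) * b j) * L⁻¹ ^ (-(b j)) *
        (1 - t⁻¹ ^ ((a j - 1) * (a j - b j)) * L⁻¹ ^ (b j - a j)) /
        ((1 - t⁻¹ ^ (a j * (a j - 1)) * L⁻¹ ^ (1 - a j)) *
          (1 - t⁻¹ ^ ((a j - 1) * b j) * L⁻¹ ^ (-(b j))))) :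
    F' = t ^ (-2 * ((k : ℤ) - 1) * ((m : ℤ) - 1)) *
      L ^ (2 * (k : ℤ) + 2 * m - 2) * F := by
  subst hF hF'
  -- products are equal term by term
  have hprod : (∏ j, (L⁻¹ - 1) * t⁻¹ ^ ((a j - 1) * b j) * L⁻¹ ^ (-(b j)) *
        (1 - t⁻¹ ^ ((a j - 1) * (a j - b j)) * L⁻¹ ^ (b j - a j)) /
        ((1 - t⁻¹ ^ (a j * (a j - 1)) * L⁻¹ ^ (1 - a j)) *
          (1 - t⁻¹ ^ ((a j - 1) * b j) * L⁻¹ ^ (-(b j))))) =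
      ∏ j, (L - 1) * t ^ ((a j - 1) * b j) * L ^ (-(b j)) *
        (1 - t ^ ((a j - 1) * (a j - b j)) * L ^ (b j - a j)) /
        ((1 - t ^ (a j * (a j - 1)) * L ^ (1 - a j)) *
          (1 - t ^ ((a j - 1) * b j) * L ^ (-(b j)))) := by
    refine Finset.prod_congr rfl fun j _ => ?_
    have hd1 := hden1 j
    have hd2 := hden2 j
    have hd1' := hden1' j
    have hd2' := hden2' j
    clear hden1 hden2 hden1' hden2' hab
    simp only [show (a j - 1) * (a j - b j) = a j * (a j - 1) - (a j - 1) * b j from by ring]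
      at hd1 hd2 hd1' hd2' ⊢
    simp only [zpow_sub₀ ht, zpow_sub₀ hL, zpow_neg, zpow_one, inv_zpow, inv_inv,
      mul_inv_rev] at hd1 hd2 hd1' hd2' ⊢
    rw [div_eq_div_iff (mul_ne_zero hd1' hd2') (mul_ne_zero hd1 hd2)]
    have hP : t ^ ((a j - 1) * b j) ≠ 0 := zpow_ne_zero _ ht
    have hS : t ^ (a j * (a j - 1)) ≠ 0 := zpow_ne_zero _ ht
    have hQ : L ^ (b j) ≠ 0 := zpow_ne_zero _ hL
    have hA : L ^ (a j) ≠ 0 := zpow_ne_zero _ hL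
    generalize hPe : t ^ ((a j - 1) * b j) = P at hP ⊢
    generalize hSe : t ^ (a j * (a j - 1)) = S at hS ⊢
    generalize hQe : L ^ (b j) = Q at hQ ⊢
    generalize hAe : L ^ (a j) = A at hA ⊢
    field_simp
    ring
  rw [hprod]
  have hpref : (L⁻¹ - 1) ^ 2 * t⁻¹ ^ (((k : ℤ) - 1) * ((m : ℤ) - 1)) *
      L⁻¹ ^ (-(k : ℤ) - m) =
      t ^ (-2 * ((k : ℤ) - 1) * ((m : ℤ) - 1)) * L ^ (2 * (k : ℤ) + 2 * m - 2) *
        ((L - 1) ^ 2 * t ^ (((k : ℤ) - 1) * ((m : ℤ) - 1)) * L ^ (-(k : ℤ) - m)) := by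
    have hX : t ^ (((k : ℤ) - 1) * ((m : ℤ) - 1)) ≠ 0 := zpow_ne_zero _ ht
    have hU : L ^ ((k : ℤ)) ≠ 0 := zpow_ne_zero _ hL
    have hV : L ^ ((m : ℤ)) ≠ 0 := zpow_ne_zero _ hL
    simp only [show -2 * ((k : ℤ) - 1) * ((m : ℤ) - 1) =
        0 - ((k : ℤ) - 1) * ((m : ℤ) - 1) - ((k : ℤ) - 1) * ((m : ℤ) - 1) from by ring,
      show 2 * (k : ℤ) + 2 * (m : ℤ) - 2 =
        (k : ℤ) + (k : ℤ) + ((m : ℤ) + (m : ℤ)) - 1 - 1 from by ring,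
      show -(k : ℤ) - (m : ℤ) = 0 - (k : ℤ) - (m : ℤ) from by ring,
      zpow_sub₀ ht, zpow_sub₀ hL, zpow_add₀ hL, zpow_neg, zpow_zero, zpow_one,
      inv_zpow, inv_inv, mul_inv_rev, one_mul]
    generalize t ^ (((k : ℤ) - 1) * ((m : ℤ) - 1)) = X at hX ⊢
    generalize L ^ ((k : ℤ)) = U at hU ⊢
    generalize L ^ ((m : ℤ)) = V at hV ⊢
    field_simp
    ring
  rw [hpref]
  ring
end
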